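/- arXiv:1401.1037 — 3 statements merged into one kernel-verified Lean document; each statement's English description precedes it below -/
import Mathlib

section
/- Let $\mathfrak{g} = \mathfrak{k} \oplus \mathfrak{p}$ be a vector space decomposition of a Lie algebra $\mathfrak{g}$ with $[\mathfrak{k},\mathfrak{k}] \subseteq \mathfrak{k}$, $[\mathfrak{k},\mathfrak{p}] \subseteq \mathfrak{p}$, $[\mathfrak{p},\mathfrak{p}] \subseteq \mathfrak{k}$, and let $\mathfrak{g}_u$ be the compact dual Lie algebra on the same vector space with the bracket $[\cdot,\cdot]_u$ modified by a sign on $\mathfrak{p} \times \mathfrak{p}$. Let $\mathfrak{a}$ be a trivial module. Then the identity on underlying vector spaces induces an isomorphism of cochain complexes between $\{\omega\colon \Lambda^n\mathfrak{g} \to \mathfrak{a} \mid i_y\omega = 0, \theta_y\omega = 0 \,\forall y \in \mathfrak{k}\}$ and the corresponding relative complex for $(\mathfrak{g}_u,\mathfrak{k})$, and hence an isomorphism $\mu^n\colon H^n_{Lie}((\mathfrak{g},\mathfrak{k});\mathfrak{a}) \xrightarrow{\cong} H^n_{Lie}((\mathfrak{g}_u,\mathfrak{k});\mathfrak{a})$.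 -/
/-- Chevalley–Eilenberg differential, with the Lie bracket `br` and the module
action `ρ` given explicitly:
`(dω)(x₀,…,xₙ) = ∑ᵢ (-1)ⁱ xᵢ.ω(…,x̂ᵢ,…) + ∑_{i<j} (-1)^{i+j} ω([xᵢ,xⱼ],…,x̂ᵢ,…,x̂ⱼ,…)`. -/
def lieD {L M : Type*} [AddCommGroup M] (br : L → L → L) (ρ : L → M → M) (n : ℕ)
    (f : (Fin n → L) → M) : (Fin (n + 1) → L) → M :=
  fun x =>
    (∑ i : Fin (n + 1), (-1 : ℤ) ^ (i : ℕ) • ρ (x i) (f (x ∘ i.succAbove))) +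
    ∑ i : Fin (n + 1), ∑ j : Fin (n + 1),
      if (i : ℕ) < (j : ℕ) then
        (-1 : ℤ) ^ ((i : ℕ) + (j : ℕ)) • f (fun k : Fin n =>
          if (k : ℕ) = 0 then br (x i) (x j)
          else x ⟨if (k : ℕ) - 1 < (i : ℕ) then (k : ℕ) - 1
                  else if (k : ℕ) < (j : ℕ) then (k : ℕ) else (k : ℕ) + 1,
                  by have := k.isLt; split_ifs <;> omega⟩)
      else 0

/-- The conditions cutting out the relative (Chevalley–Eilenberg) cochains for a
subalgebra `𝔥`: vanishing of all insertions `i_y` and all Lie derivatives `θ_y`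
for `y ∈ 𝔥`. -/
def IsRelCochain {L M : Type*} [AddCommGroup M] (br : L → L → L) (ρ : L → M → M)
    (𝔥 : Set L) {n : ℕ} (f : (Fin n → L) → M) : Prop :=
  (∀ x : Fin n → L, (∃ i, x i ∈ 𝔥) → f x = 0) ∧
  (∀ y ∈ 𝔥, ∀ x : Fin n → L,
    (∑ i : Fin n, f (Function.update x i (br (x i) y))) + ρ y (f x) = 0)

/-!
The two brackets differ by `2 • ⁅π_𝔭 x, π_𝔭 y⁆`, which lies in `𝔨` because `[𝔭,𝔭] ⊆ 𝔨`.
A multilinear cochain that vanishes as soon as one argument lies in `𝔨` cannot see a change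
of one argument by an element of `𝔨`, and the brackets enter both the relative conditions
and the Chevalley–Eilenberg differential only as single arguments of the cochain.
-/

open Function

namespace AlternatingMap

variable {R L M ι : Type*} [Semiring R] [AddCommGroup L] [Module R L] [AddCommGroup M]
  [Module R M] [DecidableEq ι]

theorem map_eq_of_sub_mem (ω : L [⋀^ι]→ₗ[R] M) {S : Set L}
    (hω : ∀ x : ι → L, (∃ i, x i ∈ S) → ω x = 0) {v w : ι → L} (i : ι)
    (hi : v i - w i ∈ S) (hvw : ∀ k ≠ i, v k = w k) : ω v = ω w := by
  have hw : w = update v i (w i) := by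
    ext k
    rcases eq_or_ne k i with rfl | hk
    · simp
    · simp [update_of_ne hk, hvw k hk]
  calc ω v = ω (update v i (v i)) := by rw [update_eq_self]
    _ = ω (update v i (w i)) + ω (update v i (v i - w i)) := by
      rw [← ω.map_update_add, add_sub_cancel]
    _ = ω w := by rw [hω (update v i (v i - w i)) ⟨i, by simpa using hi⟩, add_zero, ← hw]

end AlternatingMap

section BracketChange

variable {R L M : Type*} [Semiring R] [AddCommGroup L] [Module R L] [AddCommGroup M]
  [Module R M] {br br' : L → L → L} {S : Set L}

theorem isRelCochain_congr_bracket (ρ : L → M → M) {n : ℕ} (ω : L [⋀^Fin n]→ₗ[R] M)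
    (hbr : ∀ a b, br a b - br' a b ∈ S) :
    IsRelCochain br ρ S ω ↔ IsRelCochain br' ρ S ω := by
  refine and_congr_right fun hω => forall₂_congr fun y _ => forall_congr' fun x => ?_
  rw [Finset.sum_congr rfl fun i _ => ω.map_eq_of_sub_mem (w := update x i (br' (x i) y)) hω i
    (by simpa using hbr (x i) y) fun k hk => by simp [update_of_ne hk]]

theorem lieD_congr_bracket (ρ : L → M → M) {n : ℕ} (ω : L [⋀^Fin n]→ₗ[R] M)
    (hbr : ∀ a b, br a b - br' a b ∈ S) (hω : ∀ x : Fin n → L, (∃ i, x i ∈ S) → ω x = 0) :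
    lieD br ρ n ω = lieD br' ρ n ω := by
  funext x
  unfold lieD
  congr 1
  refine Finset.sum_congr rfl fun i _ => Finset.sum_congr rfl fun j _ => ?_
  split_ifs
  · congr 1
    cases n with
    | zero => exact congrArg ω (Subsingleton.elim _ _)
    | succ m =>
      refine ω.map_eq_of_sub_mem hω 0 (by simpa using hbr (x i) (x j)) fun k hk => ?_
      simp only [Fin.val_ne_zero_iff.mpr hk, if_false]
  · rfl

end BracketChange

theorem compact_dual_relative_complex_iso_general
    {𝔤 𝔞 : Type*} [LieRing 𝔤] [LieAlgebra ℝ 𝔤] [AddCommGroup 𝔞] [Module ℝ 𝔞]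
    (𝔨 𝔭 : Submodule ℝ 𝔤)
    (πp : 𝔤 →ₗ[ℝ] 𝔤)
    (hπp : ∀ x, πp x ∈ 𝔭)
    (hpp : ∀ x ∈ 𝔭, ∀ y ∈ 𝔭, ⁅x, y⁆ ∈ 𝔨)
    (Bu : 𝔤 → 𝔤 → 𝔤) (hBu : Bu = fun x y => ⁅x, y⁆ - (2 : ℤ) • ⁅πp x, πp y⁆)
    (n : ℕ) (ω : 𝔤 [⋀^Fin n]→ₗ[ℝ] 𝔞) :
    (IsRelCochain (fun a b => ⁅a, b⁆) (fun _ _ => (0 : 𝔞)) (𝔨 : Set 𝔤) ⇑ω ↔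
      IsRelCochain Bu (fun _ _ => (0 : 𝔞)) (𝔨 : Set 𝔤) ⇑ω) ∧
    (IsRelCochain (fun a b => ⁅a, b⁆) (fun _ _ => (0 : 𝔞)) (𝔨 : Set 𝔤) ⇑ω →
      lieD (fun a b => ⁅a, b⁆) (fun _ _ => (0 : 𝔞)) n ⇑ω =
        lieD Bu (fun _ _ => (0 : 𝔞)) n ⇑ω) := by
  have hbr : ∀ a b, ⁅a, b⁆ - Bu a b ∈ (𝔨 : Set 𝔤) := fun a b => by
    simpa [hBu] using 𝔨.toAddSubgroup.zsmul_mem (hpp _ (hπp a) _ (hπp b)) 2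
  exact ⟨isRelCochain_congr_bracket _ ω hbr,
    fun hω => lieD_congr_bracket _ ω hbr hω.1⟩

/-- for a decomposition `𝔤 = 𝔨 ⊕ 𝔭` with `[𝔨,𝔨] ⊆ 𝔨`, `[𝔨,𝔭] ⊆ 𝔭`,
`[𝔭,𝔭] ⊆ 𝔨`, its compact dual bracket `[x,y]ᵤ = [x,y] - 2[π_𝔭 x, π_𝔭 y]`, and a
trivial module `𝔞`, the identity on underlying vector spaces identifies the
relative Chevalley–Eilenberg complex of `(𝔤,𝔨)` with that of `(𝔤ᵤ,𝔨)`: a cochain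
is relative for one bracket iff it is for the other, and the two differentials
agree on relative cochains.  Hence `μⁿ : Hⁿ((𝔤,𝔨);𝔞) ≅ Hⁿ((𝔤ᵤ,𝔨);𝔞)`. -/
theorem compact_dual_relative_complex_iso
    {𝔤 𝔞 : Type*} [LieRing 𝔤] [LieAlgebra ℝ 𝔤] [AddCommGroup 𝔞] [Module ℝ 𝔞]
    (𝔨 𝔭 : Submodule ℝ 𝔤) (hdisj : 𝔨 ⊓ 𝔭 = ⊥)
    (πk πp : 𝔤 →ₗ[ℝ] 𝔤)
    (hπk : ∀ x, πk x ∈ 𝔨) (hπp : ∀ x, πp x ∈ 𝔭) (hsum : ∀ x, πk x + πp x = x)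
    (hkk : ∀ x ∈ 𝔨, ∀ y ∈ 𝔨, ⁅x, y⁆ ∈ 𝔨)
    (hkp : ∀ x ∈ 𝔨, ∀ y ∈ 𝔭, ⁅x, y⁆ ∈ 𝔭)
    (hpp : ∀ x ∈ 𝔭, ∀ y ∈ 𝔭, ⁅x, y⁆ ∈ 𝔨)
    (Bu : 𝔤 → 𝔤 → 𝔤) (hBu : Bu = fun x y => ⁅x, y⁆ - (2 : ℤ) • ⁅πp x, πp y⁆)
    (n : ℕ) (ω : 𝔤 [⋀^Fin n]→ₗ[ℝ] 𝔞) :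
    (IsRelCochain (fun a b => ⁅a, b⁆) (fun _ _ => (0 : 𝔞)) (𝔨 : Set 𝔤) ⇑ω ↔
      IsRelCochain Bu (fun _ _ => (0 : 𝔞)) (𝔨 : Set 𝔤) ⇑ω) ∧
    (IsRelCochain (fun a b => ⁅a, b⁆) (fun _ _ => (0 : 𝔞)) (𝔨 : Set 𝔤) ⇑ω →
      lieD (fun a b => ⁅a, b⁆) (fun _ _ => (0 : 𝔞)) n ⇑ω =
        lieD Bu (fun _ _ => (0 : 𝔞)) n ⇑ω) :=
  compact_dual_relative_complex_iso_general 𝔨 𝔭 πp hπp hpp Bu hBu n ω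
end

section
/- Let $\mathfrak{g}$ be a real Lie algebra, $\mathfrak{k} \leq \mathfrak{g}$ a subalgebra, and suppose there is a vector space complement $\mathfrak{p}$ with $\mathfrak{g} = \mathfrak{k} \oplus \mathfrak{p}$, $[\mathfrak{k},\mathfrak{p}] \subseteq \mathfrak{p}$ and $[\mathfrak{p},\mathfrak{p}] \subseteq \mathfrak{k}$. Let $\pi_{\mathfrak{k}}, \pi_{\mathfrak{p}}$ be the projections and $\mathfrak{a}$ a trivial module. For $\lambda \in \mathrm{Hom}(\mathfrak{k},\mathfrak{a})^{\mathfrak{k}}$ define $CW^1(\lambda)(x,y) := \tfrac{1}{2}\lambda([\pi_{\mathfrak{p}}(x),\pi_{\mathfrak{p}}(y)])$. Then $CW^1(\lambda)$ is a relative 2-cochain in $C^2_{CE}((\mathfrak{g},\mathfrak{k}),\mathfrak{a})$ and is closed: $d_{CE}(CW^1(\lambda)) = 0$. Hence $CW^1$ defines a map $\mathrm{Hom}(\mathfrak{k},\mathfrak{a})^{\mathfrak{k}} \to H^2_{Lie}((\mathfrak{g},\mathfrak{k});\mathfrak{a})$. -/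
/-!
Put `Λ := λ ∘ π_𝔨 : 𝔤 → 𝔞`. Since `λ` kills `[𝔨,𝔨]` and `[𝔨,𝔭] ⊆ 𝔭 = ker π_𝔨`, `Λ` kills
`[𝔨,𝔤]`; expanding `x = π_𝔨 x + π_𝔭 x` then gives `Λ[π_𝔭 x, π_𝔭 y] = Λ[x, y]`, so
`CW¹(λ) = ½ Λ ∘ [·,·] = -½ d_{CE} Λ` is a coboundary, hence closed (the vanishing of `d_{CE}`
on it is the Jacobi identity). The relative conditions reduce to `Λ([𝔨,𝔤]) = 0`.
-/

section Cochains

variable {L M : Type*} [LieRing L] [AddCommGroup M]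

theorem lieD_two_map_lie_eq_zero (f : L →+ M) :
    lieD (fun a b => ⁅a, b⁆) (fun _ _ => (0 : M)) 2 (fun x => f ⁅x 0, x 1⁆) = 0 := by
  funext x
  calc lieD (fun a b => ⁅a, b⁆) (fun _ _ => (0 : M)) 2 (fun x => f ⁅x 0, x 1⁆) x
      = f (⁅x 0, ⁅x 2, x 1⁆⁆ + ⁅x 2, ⁅x 1, x 0⁆⁆ + ⁅x 1, ⁅x 0, x 2⁆⁆)
        - f (⁅x 0, ⁅x 1, x 2⁆⁆ + ⁅x 1, ⁅x 2, x 0⁆⁆ + ⁅x 2, ⁅x 0, x 1⁆⁆) := by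
        simp [lieD, Fin.sum_univ_succ]
        abel
    _ = 0 := by rw [lie_jacobi, lie_jacobi, map_zero, sub_zero]

theorem isRelCochain_map_lie {H : Set L} (f : L →+ M) (hf : ∀ y ∈ H, ∀ z, f ⁅y, z⁆ = 0) :
    IsRelCochain (fun a b => ⁅a, b⁆) (fun _ _ => (0 : M)) H
      (fun x : Fin 2 → L => f ⁅x 0, x 1⁆) := by
  have hf' : ∀ y ∈ H, ∀ z, f ⁅z, y⁆ = 0 := fun y hy z => by
    rw [← lie_skew, map_neg, hf y hy, neg_zero]
  refine ⟨fun x ⟨i, hi⟩ => ?_, fun y hy x => ?_⟩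
  · fin_cases i
    exacts [hf _ hi _, hf' _ hi _]
  · have hleibniz : ⁅⁅x 0, y⁆, x 1⁆ + ⁅x 0, ⁅x 1, y⁆⁆ = -⁅y, ⁅x 0, x 1⁆⁆ := by
      rw [lie_lie, ← lie_skew (x 1) y, lie_neg]
      abel
    simp only [Fin.sum_univ_two, Function.update_self, ne_eq, zero_ne_one, one_ne_zero,
      not_false_eq_true, Function.update_of_ne, add_zero]
    rw [← map_add, hleibniz, map_neg, hf y hy, neg_zero]

end Cochains

section Projections

variable {R L : Type*} [Ring R] [AddCommGroup L] [Module R L] {K P : Submodule R L}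
  {πk πp : L → L}

theorem proj_eq_zero_of_mem_compl (hdisj : K ⊓ P = ⊥) (hπk : ∀ x, πk x ∈ K)
    (hπp : ∀ x, πp x ∈ P) (hsum : ∀ x, πk x + πp x = x) {z : L} (hz : z ∈ K) : πp z = 0 := by
  have hmemK : πp z ∈ K := by
    rw [← add_sub_cancel_left (πk z) (πp z), hsum]
    exact sub_mem hz (hπk z)
  exact Submodule.disjoint_def.mp (disjoint_iff.mpr hdisj) _ hmemK (hπp z)

theorem proj_eq_self_of_mem (hdisj : K ⊓ P = ⊥) (hπk : ∀ x, πk x ∈ K)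
    (hπp : ∀ x, πp x ∈ P) (hsum : ∀ x, πk x + πp x = x) {z : L} (hz : z ∈ K) : πk z = z := by
  simpa [proj_eq_zero_of_mem_compl hdisj hπk hπp hsum hz] using hsum z

end Projections

section SymmetricPair

variable {R L M : Type*} [CommRing R] [LieRing L] [LieAlgebra R L] [AddCommGroup M] [Module R M]
  {K P : Submodule R L} {πk πp : L → L}

theorem map_lie_eq_zero_of_mem_left (Λ : L →ₗ[R] M) (hπk : ∀ x, πk x ∈ K)
    (hπp : ∀ x, πp x ∈ P) (hsum : ∀ x, πk x + πp x = x)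
    (hkp : ∀ x ∈ K, ∀ y ∈ P, ⁅x, y⁆ ∈ P) (hΛK : ∀ a ∈ K, ∀ b ∈ K, Λ ⁅a, b⁆ = 0)
    (hΛP : ∀ z ∈ P, Λ z = 0) {y : L} (hy : y ∈ K) (z : L) : Λ ⁅y, z⁆ = 0 := by
  rw [← hsum z, lie_add, map_add, hΛK y hy _ (hπk z), hΛP _ (hkp y hy _ (hπp z)), add_zero]

theorem map_lie_proj_proj (Λ : L →ₗ[R] M) (hπk : ∀ x, πk x ∈ K)
    (hπp : ∀ x, πp x ∈ P) (hsum : ∀ x, πk x + πp x = x)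
    (hkp : ∀ x ∈ K, ∀ y ∈ P, ⁅x, y⁆ ∈ P) (hΛK : ∀ a ∈ K, ∀ b ∈ K, Λ ⁅a, b⁆ = 0)
    (hΛP : ∀ z ∈ P, Λ z = 0) (a b : L) : Λ ⁅πp a, πp b⁆ = Λ ⁅a, b⁆ := by
  have hkill := fun y (hy : y ∈ K) => map_lie_eq_zero_of_mem_left Λ hπk hπp hsum hkp hΛK hΛP hy
  have hexpand : ⁅a, b⁆ = ⁅πk a, b⁆ + ⁅πp a, πk b⁆ + ⁅πp a, πp b⁆ := by
    conv_lhs => rw [← hsum a, add_lie, ← hsum b]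
    rw [lie_add (πp a), hsum, add_assoc]
  have hskew : Λ ⁅πp a, πk b⁆ = 0 := by
    rw [← lie_skew, map_neg, hkill _ (hπk b), neg_zero]
  rw [hexpand, map_add, map_add, hkill _ (hπk a), hskew, zero_add, zero_add]

end SymmetricPair

/-- for a decomposition `𝔤 = 𝔨 ⊕ 𝔭` with `[𝔨,𝔨] ⊆ 𝔨`, `[𝔨,𝔭] ⊆ 𝔭`,
`[𝔭,𝔭] ⊆ 𝔨`, a trivial module `𝔞` and a `𝔨`-invariant `λ ∈ Hom(𝔨,𝔞)^𝔨` (i.e.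
`λ([𝔨,𝔨]) = 0`), the Chern–Weil cochain `CW¹(λ)(x,y) = ½ λ([π_𝔭 x, π_𝔭 y])` is a
relative 2-cochain in `C²_{CE}((𝔤,𝔨),𝔞)` and is closed, `d_{CE}(CW¹(λ)) = 0`;
hence `CW¹` defines a map `Hom(𝔨,𝔞)^𝔨 → H²_{Lie}((𝔤,𝔨);𝔞)`. -/
theorem chernWeil_one_closed_relative
    {𝔤 𝔞 : Type*} [LieRing 𝔤] [LieAlgebra ℝ 𝔤] [AddCommGroup 𝔞] [Module ℝ 𝔞]
    (𝔨 𝔭 : Submodule ℝ 𝔤) (hdisj : 𝔨 ⊓ 𝔭 = ⊥)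
    (πk πp : 𝔤 →ₗ[ℝ] 𝔤)
    (hπk : ∀ x, πk x ∈ 𝔨) (hπp : ∀ x, πp x ∈ 𝔭) (hsum : ∀ x, πk x + πp x = x)
    (hkk : ∀ x ∈ 𝔨, ∀ y ∈ 𝔨, ⁅x, y⁆ ∈ 𝔨)
    (hkp : ∀ x ∈ 𝔨, ∀ y ∈ 𝔭, ⁅x, y⁆ ∈ 𝔭)
    (hpp : ∀ x ∈ 𝔭, ∀ y ∈ 𝔭, ⁅x, y⁆ ∈ 𝔨)
    (lam : 𝔨 →ₗ[ℝ] 𝔞)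
    (hlam : ∀ (a b : 𝔤) (ha : a ∈ 𝔨) (hb : b ∈ 𝔨), lam ⟨⁅a, b⁆, hkk a ha b hb⟩ = 0)
    (CW1 : (Fin 2 → 𝔤) → 𝔞)
    (hCW1 : CW1 = fun x => (2⁻¹ : ℝ) •
      lam ⟨⁅πp (x 0), πp (x 1)⁆, hpp _ (hπp (x 0)) _ (hπp (x 1))⟩) :
    IsRelCochain (fun a b => ⁅a, b⁆) (fun _ _ => (0 : 𝔞)) (𝔨 : Set 𝔤) CW1 ∧
    lieD (fun a b => ⁅a, b⁆) (fun _ _ => (0 : 𝔞)) 2 CW1 = 0 := by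
  set Λ : 𝔤 →ₗ[ℝ] 𝔞 := lam ∘ₗ πk.codRestrict 𝔨 hπk
  have hΛ_of_mem : ∀ z (hz : z ∈ 𝔨), Λ z = lam ⟨z, hz⟩ := fun z hz =>
    congrArg lam (Subtype.ext (proj_eq_self_of_mem hdisj hπk hπp hsum hz))
  have hΛP : ∀ z ∈ 𝔭, Λ z = 0 := fun z hz => by
    have hπkz : πk z = 0 := proj_eq_zero_of_mem_compl (inf_comm 𝔨 𝔭 ▸ hdisj) hπp hπk
      (fun x => (add_comm (πp x) (πk x)).trans (hsum x)) hz
    have hcod : πk.codRestrict 𝔨 hπk z = 0 := Subtype.ext hπkz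
    simp only [Λ, LinearMap.comp_apply, hcod, map_zero]
  have hΛK : ∀ a ∈ 𝔨, ∀ b ∈ 𝔨, Λ ⁅a, b⁆ = 0 := fun a ha b hb => by
    rw [hΛ_of_mem _ (hkk a ha b hb), hlam a b ha hb]
  have hCW : CW1 = fun x => ((2⁻¹ : ℝ) • Λ).toAddMonoidHom ⁅x 0, x 1⁆ := by
    funext x
    rw [hCW1]
    dsimp only
    rw [← hΛ_of_mem, map_lie_proj_proj Λ hπk hπp hsum hkp hΛK hΛP]
    rfl
  refine hCW ▸ ⟨isRelCochain_map_lie _ fun y hy z => ?_, lieD_two_map_lie_eq_zero _⟩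
  simp [map_lie_eq_zero_of_mem_left Λ hπk hπp hsum hkp hΛK hΛP hy z]
end

section
/- Let $\mathfrak{k}$ be a Lie algebra, $\mathfrak{g} = \mathfrak{k}_1 \oplus \mathfrak{k}_2$ with $\mathfrak{k}_1 = \mathfrak{k}_2 = \mathfrak{k}$, and $\mathfrak{a}$ a trivial module over a field. Then the map $\kappa^n\colon H^n_{Lie}((\mathfrak{k}_1\oplus\mathfrak{k}_2,\mathfrak{k}_1);\mathfrak{a}) \to H^n_{Lie}(\mathfrak{k}_1\oplus\mathfrak{k}_2;\mathfrak{a})$ induced by inclusion of relative cochains is injective for all $n$; that is, $\mathfrak{k}_1$ is non-cohomologous to zero in $\mathfrak{k}_1\oplus\mathfrak{k}_2$. -/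
/-! The projection `π : 𝔨 × 𝔨 → 0 × 𝔨` is a Lie algebra morphism, so pulling back along it commutes
with the Chevalley–Eilenberg differential. Given `ω = dβ` with `ω` relative, put `β' = π^* β`: it
kills `𝔨₁` and is `𝔨₁`-invariant since `π [𝔨 ⊕ 𝔨, 𝔨₁] = 0`, and `dβ' = π^* dβ = π^* ω = ω`, the last
step because a multilinear form vanishing on `𝔨₁`-arguments only sees the `𝔨₂`-components. -/

theorem AlternatingMap.map_eq_map_of_sub_mem {R M N ι : Type*} [CommRing R] [AddCommGroup M]
    [Module R M] [AddCommGroup N] [Module R N] [Fintype ι] (f : M [⋀^ι]→ₗ[R] N) {K : Set M}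
    (hf : ∀ x : ι → M, (∃ i, x i ∈ K) → f x = 0) {x y : ι → M} (hxy : ∀ i, x i - y i ∈ K) :
    f x = f y := by
  classical
  have hsplit : x = y + (x - y) := by abel
  rw [hsplit, f.map_add_univ, Finset.sum_eq_single Finset.univ]
  · simp
  · intro s _ hs
    obtain ⟨i, hi⟩ : ∃ i, i ∉ s := by simpa [Finset.eq_univ_iff_forall] using hs
    exact hf _ ⟨i, by simpa [hi] using hxy i⟩
  · simp

theorem lieD_comp {L L' M : Type*} [AddCommGroup M] (br : L → L → L) (br' : L' → L' → L')
    (ρ' : L' → M → M) (φ : L → L') (hφ : ∀ a b, φ (br a b) = br' (φ a) (φ b)) (n : ℕ)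
    (f : (Fin n → L') → M) :
    lieD br (fun a => ρ' (φ a)) n (fun x => f (φ ∘ x)) = fun x => lieD br' ρ' n f (φ ∘ x) := by
  funext x
  simp only [lieD]
  congr 1
  refine Finset.sum_congr rfl fun i _ => Finset.sum_congr rfl fun j _ => ?_
  split_ifs
  · congr 2
    funext k
    simp only [Function.comp_apply, apply_ite φ, hφ]
  · rfl

theorem isRelCochain_compLinearMap {R L L' M : Type*} [CommRing R] [AddCommGroup L] [Module R L]
    [AddCommGroup L'] [Module R L'] [AddCommGroup M] [Module R M] (br : L → L → L) {𝔥 : Set L}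
    {n : ℕ} (β : L' [⋀^Fin n]→ₗ[R] M) (φ : L →ₗ[R] L') (hφ𝔥 : ∀ y ∈ 𝔥, φ y = 0)
    (hφbr : ∀ a, ∀ y ∈ 𝔥, φ (br a y) = 0) :
    IsRelCochain br (fun _ _ => (0 : M)) 𝔥 ⇑(β.compLinearMap φ) := by
  refine ⟨fun x ⟨i, hi⟩ => β.map_coord_zero i (hφ𝔥 _ hi), fun y hy x => ?_⟩
  have hupdate : ∀ i, β.compLinearMap φ (Function.update x i (br (x i) y)) = 0 := fun i =>
    β.map_coord_zero i (by simpa using hφbr (x i) y hy)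
  simp [hupdate]

theorem first_factor_ncz_in_double_general
    {𝔨 𝔞 : Type*} [LieRing 𝔨] [LieAlgebra ℝ 𝔨] [AddCommGroup 𝔞] [Module ℝ 𝔞]
    (n : ℕ)
    (br : (𝔨 × 𝔨) → (𝔨 × 𝔨) → (𝔨 × 𝔨)) (hbr : br = fun a b => (⁅a.1, b.1⁆, ⁅a.2, b.2⁆))
    (ω : (𝔨 × 𝔨) [⋀^Fin (n + 1)]→ₗ[ℝ] 𝔞)
    (hrel : IsRelCochain br (fun _ _ => (0 : 𝔞)) {p : 𝔨 × 𝔨 | p.2 = 0} ⇑ω)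
    (hbdry : ∃ β : (𝔨 × 𝔨) [⋀^Fin n]→ₗ[ℝ] 𝔞,
      ⇑ω = lieD br (fun _ _ => (0 : 𝔞)) n ⇑β) :
    ∃ β' : (𝔨 × 𝔨) [⋀^Fin n]→ₗ[ℝ] 𝔞,
      IsRelCochain br (fun _ _ => (0 : 𝔞)) {p : 𝔨 × 𝔨 | p.2 = 0} ⇑β' ∧
      ⇑ω = lieD br (fun _ _ => (0 : 𝔞)) n ⇑β' := by
  obtain ⟨β, hβ⟩ := hbdry
  let π : (𝔨 × 𝔨) →ₗ[ℝ] (𝔨 × 𝔨) := (LinearMap.inr ℝ 𝔨 𝔨).comp (LinearMap.snd ℝ 𝔨 𝔨)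
  have hπbr : ∀ a b, π (br a b) = br (π a) (π b) := fun a b => by simp [hbr, π]
  refine ⟨β.compLinearMap π,
    isRelCochain_compLinearMap br β π (fun y hy => by simpa [π] using hy)
      (fun a y hy => by simp [hbr, π, show y.2 = 0 from hy]), ?_⟩
  funext x
  calc ω x = ω (π ∘ x) := ω.map_eq_map_of_sub_mem hrel.1 fun i => by simp [π]
    _ = lieD br (fun _ _ => 0) n β (π ∘ x) := congrFun hβ _
    _ = lieD br (fun _ _ => 0) n (β.compLinearMap π) x :=
      (congrFun (lieD_comp br br _ π hπbr n β) x).symm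

/-- for `𝔤 = 𝔨 ⊕ 𝔨` (two copies of the same Lie algebra `𝔨`) and a
trivial module `𝔞` over the field `ℝ`, the map
`κⁿ : H^n_{Lie}((𝔨⊕𝔨,𝔨₁);𝔞) → H^n_{Lie}(𝔨⊕𝔨;𝔞)` induced by the inclusion of
relative cochains is injective in every (positive) degree `n + 1`; that is, the
first factor `𝔨₁` is non-cohomologous to zero in `𝔨 ⊕ 𝔨`: any relative cocycle
which is a coboundary in the full complex is already a relative coboundary. -/
theorem first_factor_ncz_in_double
    {𝔨 𝔞 : Type*} [LieRing 𝔨] [LieAlgebra ℝ 𝔨] [AddCommGroup 𝔞] [Module ℝ 𝔞]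
    (n : ℕ)
    (br : (𝔨 × 𝔨) → (𝔨 × 𝔨) → (𝔨 × 𝔨)) (hbr : br = fun a b => (⁅a.1, b.1⁆, ⁅a.2, b.2⁆))
    (ω : (𝔨 × 𝔨) [⋀^Fin (n + 1)]→ₗ[ℝ] 𝔞)
    (hrel : IsRelCochain br (fun _ _ => (0 : 𝔞)) {p : 𝔨 × 𝔨 | p.2 = 0} ⇑ω)
    (hcocycle : lieD br (fun _ _ => (0 : 𝔞)) (n + 1) ⇑ω = 0)
    (hbdry : ∃ β : (𝔨 × 𝔨) [⋀^Fin n]→ₗ[ℝ] 𝔞,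
      ⇑ω = lieD br (fun _ _ => (0 : 𝔞)) n ⇑β) :
    ∃ β' : (𝔨 × 𝔨) [⋀^Fin n]→ₗ[ℝ] 𝔞,
      IsRelCochain br (fun _ _ => (0 : 𝔞)) {p : 𝔨 × 𝔨 | p.2 = 0} ⇑β' ∧
      ⇑ω = lieD br (fun _ _ => (0 : 𝔞)) n ⇑β' :=
  first_factor_ncz_in_double_general n br hbr ω hrel hbdry
end
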